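/- arXiv:1908.08901 — 2 statements merged into one kernel-verified Lean document; each statement's English description precedes it below -/
import Mathlib

section
/- Let D ⊂ ℝ² be a bounded measurable set and let T_1, …, T_N be pairwise disjoint measurable subsets of D, each of finite positive Lebesgue measure and of diameter at most h ∈ (0,1], whose union equals D up to a Lebesgue-null set. Let Z_1, …, Z_N be an independent family of random variables with Z_i uniformly distributed on T_i. Then for every s ∈ (0,1) and every v ∈ L²(D) with finite Sobolev–Slobodeckij seminorm |v|_{W^{s,2}(D)}, it holds that E[|∫_D v(x) dx − ∑_{i=1}^N |T_i| v(Z_i)|²] ≤ h^{2+2s} |v|²_{W^{s,2}(D)}. -/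
/-! For `Y i = |T i| v (Z i)` the `Y i` are independent and `∑ i, E (Y i) = ∫_D v`, so the
mean-square error is `∑ i, Var (Y i)`. Since `Z i` is uniform on `T i`, comparing two independent
copies gives `Var (Y i) = ½ ∫∫_{T i × T i} (v x - v z)²`, and on `T i × T i` we have
`|x - z| ≤ h`, hence `(v x - v z)² ≤ h^(2+2s) |v x - v z|² / |x - z|^(2+2s)`. The squares
`T i × T i` are disjoint subsets of `D × D`. -/

open MeasureTheory ProbabilityTheory

theorem integral_prod_sub_sq {α : Type*} [MeasurableSpace α] {μ : Measure α}
    [IsFiniteMeasure μ] {g : α → ℝ} (hg : MemLp g 2 μ) :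
    ∫ p, (g p.1 - g p.2) ^ 2 ∂μ.prod μ
      = 2 * (μ.real Set.univ * ∫ x, g x ^ 2 ∂μ - (∫ x, g x ∂μ) ^ 2) := by
  have hsq : Integrable (fun x => g x ^ 2) μ := hg.integrable_sq
  have hg1 : Integrable g μ := hg.integrable one_le_two
  calc ∫ p, (g p.1 - g p.2) ^ 2 ∂μ.prod μ
      = ∫ p, (g p.1 ^ 2 + g p.2 ^ 2 - 2 * (g p.1 * g p.2)) ∂μ.prod μ := by
        congr 1 with p; ring
    _ = ∫ p, g p.1 ^ 2 ∂μ.prod μ + ∫ p, g p.2 ^ 2 ∂μ.prod μ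
          - 2 * ∫ p, g p.1 * g p.2 ∂μ.prod μ := by
        rw [integral_sub, integral_add (hsq.comp_fst μ) (hsq.comp_snd μ), integral_const_mul]
        · exact (hsq.comp_fst μ).add (hsq.comp_snd μ)
        · exact (hg1.mul_prod hg1).const_mul 2
    _ = _ := by
        rw [integral_fun_fst (fun x => g x ^ 2), integral_fun_snd (fun x => g x ^ 2),
          integral_prod_mul g g, smul_eq_mul]
        ring

section SetIntegral

variable {β ι : Type*} [MeasurableSpace β] {ν : Measure β} [Fintype ι] {s : ι → Set β}
  {t : Set β} {F : β → ℝ}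

theorem setIntegral_eq_sum_of_ae_partition (hs : ∀ i, MeasurableSet (s i))
    (hdisj : Pairwise (Function.onFun Disjoint s)) (hst : ∀ i, s i ⊆ t)
    (hcover : ν (t \ ⋃ i, s i) = 0) (hF : ∀ i, IntegrableOn F (s i) ν) :
    ∫ x in t, F x ∂ν = ∑ i, ∫ x in s i, F x ∂ν := by
  have hst' : t =ᵐ[ν] ⋃ i, s i := by
    rw [ae_eq_set, Set.sdiff_eq_empty.2 (Set.iUnion_subset hst)]
    exact ⟨hcover, measure_empty⟩
  rw [setIntegral_congr_set hst', integral_iUnion_fintype hs hdisj hF]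

theorem sum_setIntegral_le_setIntegral (hs : ∀ i, MeasurableSet (s i))
    (hdisj : Pairwise (Function.onFun Disjoint s)) (hst : ∀ i, s i ⊆ t)
    (hF : IntegrableOn F t ν) (hF0 : 0 ≤ᵐ[ν.restrict t] F) :
    ∑ i, ∫ x in s i, F x ∂ν ≤ ∫ x in t, F x ∂ν := by
  rw [← integral_iUnion_fintype hs hdisj fun i => hF.mono_set (hst i)]
  exact setIntegral_mono_set hF hF0 (Set.iUnion_subset hst).eventuallyLE

end SetIntegral

theorem sq_sub_le_rpow_mul_div {α : Type*} [MetricSpace α] (f : α → ℝ) {x z : α} {h q : ℝ}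
    (hq : 0 ≤ q) (hxz : dist x z ≤ h) :
    (f x - f z) ^ 2 ≤ h ^ q * (|f x - f z| ^ 2 / dist x z ^ q) := by
  rcases eq_or_ne x z with rfl | hne
  · simp
  have hd : 0 < dist x z ^ q := Real.rpow_pos_of_pos (dist_pos.2 hne) q
  rw [sq_abs, mul_div_assoc', le_div_iff₀ hd, mul_comm (h ^ q)]
  exact mul_le_mul_of_nonneg_left (Real.rpow_le_rpow dist_nonneg hxz hq) (sq_nonneg _)

namespace MeasureTheory.pdf.IsUniform

variable {Ω E : Type*} [MeasurableSpace Ω] [MeasurableSpace E] {P : Measure Ω} {μ : Measure E}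
  {X : Ω → E} {S : Set E}

theorem aestronglyMeasurable_map (hX : IsUniform X S P μ) {f : E → ℝ}
    (hf : AEStronglyMeasurable f (μ.restrict S)) : AEStronglyMeasurable f (P.map X) := by
  rw [hX, ProbabilityTheory.cond]
  exact hf.smul_measure _

theorem integral_comp (hX : IsUniform X S P μ) (hS0 : μ S ≠ 0) (hS : μ S ≠ ⊤)
    {f : E → ℝ} (hf : AEStronglyMeasurable f (μ.restrict S)) :
    ∫ ω, f (X ω) ∂P = (μ.real S)⁻¹ * ∫ x in S, f x ∂μ := by
  rw [← integral_map (hX.aemeasurable hS0 hS) (hX.aestronglyMeasurable_map hf), hX,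
    ProbabilityTheory.cond, integral_smul_measure, ENNReal.toReal_inv, smul_eq_mul,
    measureReal_def]

theorem integral_measureReal_mul_comp (hX : IsUniform X S P μ) (hS0 : μ S ≠ 0)
    (hS : μ S ≠ ⊤) {f : E → ℝ} (hf : AEStronglyMeasurable f (μ.restrict S)) :
    ∫ ω, μ.real S * f (X ω) ∂P = ∫ x in S, f x ∂μ := by
  rw [integral_const_mul, hX.integral_comp hS0 hS hf,
    mul_inv_cancel_left₀ ((measureReal_ne_zero_iff hS).2 hS0)]

theorem memLp_comp (hX : IsUniform X S P μ) (hS0 : μ S ≠ 0) (hS : μ S ≠ ⊤)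
    {p : ENNReal} {f : E → ℝ} (hf : MemLp f p (μ.restrict S)) :
    MemLp (fun ω => f (X ω)) p P := by
  have hf' : MemLp f p (P.map X) := by
    rw [hX, ProbabilityTheory.cond]
    exact hf.smul_measure (ENNReal.inv_ne_top.2 hS0)
  exact (memLp_map_measure_iff hf'.1 (hX.aemeasurable hS0 hS)).1 hf'

variable [IsProbabilityMeasure P]

theorem variance_measureReal_mul_comp (hX : IsUniform X S P μ) (hS0 : μ S ≠ 0)
    (hS : μ S ≠ ⊤) {f : E → ℝ} (hf : MemLp f 2 (μ.restrict S)) :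
    variance (fun ω => μ.real S * f (X ω)) P
      = 2⁻¹ * ∫ p, (f p.1 - f p.2) ^ 2 ∂(μ.restrict S).prod (μ.restrict S) := by
  have : IsFiniteMeasure (μ.restrict S) := isFiniteMeasure_restrict.2 hS
  have hsq : ∫ ω, (μ.real S * f (X ω)) ^ 2 ∂P = μ.real S * ∫ x in S, f x ^ 2 ∂μ := by
    simp_rw [mul_pow]
    rw [integral_const_mul, hX.integral_comp hS0 hS (f := fun x => f x ^ 2) (hf.1.pow 2)]
    field_simp
  rw [variance_eq_sub ((hX.memLp_comp hS0 hS hf).const_mul _), integral_prod_sub_sq hf,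
    measureReal_restrict_apply_univ]
  simp only [Pi.pow_apply]
  rw [hsq, hX.integral_measureReal_mul_comp hS0 hS hf.1]
  ring

theorem variance_measureReal_mul_comp_le [MetricSpace E] (hX : IsUniform X S P μ)
    (hS0 : μ S ≠ 0) (hS : μ S ≠ ⊤) (hSm : MeasurableSet S) {h : ℝ}
    (hdiam : ∀ x ∈ S, ∀ z ∈ S, dist x z ≤ h) {q : ℝ} (hq : 0 ≤ q)
    {f : E → ℝ} (hf : MemLp f 2 (μ.restrict S))
    (hR : Integrable (fun p : E × E => |f p.1 - f p.2| ^ 2 / dist p.1 p.2 ^ q)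
      ((μ.restrict S).prod (μ.restrict S))) :
    variance (fun ω => μ.real S * f (X ω)) P
      ≤ h ^ q * ∫ p, |f p.1 - f p.2| ^ 2 / dist p.1 p.2 ^ q
          ∂(μ.restrict S).prod (μ.restrict S) := by
  have hpt : ∀ᵐ p ∂(μ.restrict S).prod (μ.restrict S),
      (f p.1 - f p.2) ^ 2 ≤ h ^ q * (|f p.1 - f p.2| ^ 2 / dist p.1 p.2 ^ q) := by
    filter_upwards [Measure.quasiMeasurePreserving_fst.ae (ae_restrict_mem hSm),
      Measure.quasiMeasurePreserving_snd.ae (ae_restrict_mem hSm)] with p hp₁ hp₂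
    exact sq_sub_le_rpow_mul_div f hq (hdiam _ hp₁ _ hp₂)
  have hA : 0 ≤ ∫ p, (f p.1 - f p.2) ^ 2 ∂(μ.restrict S).prod (μ.restrict S) :=
    integral_nonneg fun p => sq_nonneg _
  calc variance (fun ω => μ.real S * f (X ω)) P
      = 2⁻¹ * ∫ p, (f p.1 - f p.2) ^ 2 ∂(μ.restrict S).prod (μ.restrict S) :=
        hX.variance_measureReal_mul_comp hS0 hS hf
    _ ≤ ∫ p, (f p.1 - f p.2) ^ 2 ∂(μ.restrict S).prod (μ.restrict S) := by linarith
    _ ≤ _ := by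
        rw [← integral_const_mul]
        exact integral_mono_of_nonneg (.of_forall fun p => sq_nonneg _) (hR.const_mul _) hpt

end MeasureTheory.pdf.IsUniform

theorem integral_sq_sub_sum_eq_sum_variance_of_isUniform {Ω E ι : Type*} [MeasurableSpace Ω]
    [MeasurableSpace E] {P : Measure Ω} [IsProbabilityMeasure P] {μ : Measure E} [Fintype ι]
    {D : Set E} {T : ι → Set E}
    (hTmeas : ∀ i, MeasurableSet (T i)) (hTsub : ∀ i, T i ⊆ D)
    (hTdisj : Pairwise (Function.onFun Disjoint T)) (hT0 : ∀ i, μ (T i) ≠ 0)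
    (hT : ∀ i, μ (T i) ≠ ⊤) (hcover : μ (D \ ⋃ i, T i) = 0)
    {Z : ι → Ω → E} (hZ : ∀ i, pdf.IsUniform (Z i) (T i) P μ) (hZindep : iIndepFun Z P)
    {f : E → ℝ} (hf : MemLp f 2 (μ.restrict D)) :
    ∫ ω, |(∫ x in D, f x ∂μ) - ∑ i, μ.real (T i) * f (Z i ω)| ^ 2 ∂P
      = ∑ i, variance (fun ω => μ.real (T i) * f (Z i ω)) P := by
  have hfT i : MemLp f 2 (μ.restrict (T i)) :=
    hf.mono_measure (Measure.restrict_mono (hTsub i) le_rfl)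
  have hfT₁ i : IntegrableOn f (T i) μ := by
    have := isFiniteMeasure_restrict.2 (hT i)
    exact (hfT i).integrable one_le_two
  set Y : ι → Ω → ℝ := fun i ω => μ.real (T i) * f (Z i ω) with hY_def
  have hY i : MemLp (Y i) 2 P := ((hZ i).memLp_comp (hT0 i) (hT i) (hfT i)).const_mul _
  have hmean : P[∑ i, Y i] = ∫ x in D, f x ∂μ := by
    rw [setIntegral_eq_sum_of_ae_partition hTmeas hTdisj hTsub hcover hfT₁]
    simp only [Finset.sum_apply]
    rw [integral_finsetSum _ fun i _ => (hY i).integrable one_le_two]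
    exact Finset.sum_congr rfl fun i _ =>
      (hZ i).integral_measureReal_mul_comp (hT0 i) (hT i) (hfT i).1
  have hindep : Set.Pairwise ↑(Finset.univ : Finset ι) fun i j => IndepFun (Y i) (Y j) P :=
    fun i _ j _ hij => (hZindep.indepFun hij).comp₀
      ((hZ i).aemeasurable (hT0 i) (hT i)) ((hZ j).aemeasurable (hT0 j) (hT j))
      ((hZ i).aestronglyMeasurable_map ((hfT i).1.const_mul _)).aemeasurable
      ((hZ j).aestronglyMeasurable_map ((hfT j).1.const_mul _)).aemeasurable
  rw [← IndepFun.variance_sum (fun i _ => hY i) hindep,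
    variance_eq_integral (memLp_finsetSum' _ fun i _ => hY i).aestronglyMeasurable.aemeasurable,
    hmean]
  congr 1 with ω
  simp only [Finset.sum_apply, hY_def, sq_abs]
  ring

theorem stmt_5_general
    {Ω : Type*} [MeasurableSpace Ω] (P : Measure Ω) [IsProbabilityMeasure P]
    (D : Set (EuclideanSpace ℝ (Fin 2)))
    (h : ℝ) (hh0 : 0 < h)
    (N : ℕ) (T : Fin N → Set (EuclideanSpace ℝ (Fin 2)))
    (hTmeas : ∀ i, MeasurableSet (T i))
    (hTsub : ∀ i, T i ⊆ D)
    (hTdisj : Pairwise (Function.onFun Disjoint T))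
    (hTpos : ∀ i, 0 < volume (T i))
    (hTfin : ∀ i, volume (T i) < ⊤)
    (hTdiam : ∀ i, ∀ x ∈ T i, ∀ z ∈ T i, dist x z ≤ h)
    (hcover : volume (D \ ⋃ i, T i) = 0)
    (Z : Fin N → Ω → EuclideanSpace ℝ (Fin 2))
    (hZlaw : ∀ i, Measure.map (Z i) P = (volume (T i))⁻¹ • volume.restrict (T i))
    (hZindep : iIndepFun Z P)
    (s : ℝ) (hs0 : 0 < s)
    (v : EuclideanSpace ℝ (Fin 2) → ℝ)
    (hv : MemLp v 2 (volume.restrict D))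
    (hsem : Integrable
      (fun p : EuclideanSpace ℝ (Fin 2) × EuclideanSpace ℝ (Fin 2) =>
        |v p.1 - v p.2| ^ 2 / dist p.1 p.2 ^ (2 + 2 * s))
      ((volume.restrict D).prod (volume.restrict D))) :
    ∫ ω, |(∫ x in D, v x) - ∑ i, (volume (T i)).toReal * v (Z i ω)| ^ 2 ∂P
      ≤ h ^ (2 + 2 * s)
          * ∫ x in D, ∫ z in D, |v x - v z| ^ 2 / dist x z ^ (2 + 2 * s) := by
  set R := fun p : EuclideanSpace ℝ (Fin 2) × EuclideanSpace ℝ (Fin 2) =>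
    |v p.1 - v p.2| ^ 2 / dist p.1 p.2 ^ (2 + 2 * s)
  have hRD : IntegrableOn R (D ×ˢ D) (volume.prod volume) := by
    rwa [IntegrableOn, ← Measure.prod_restrict]
  have hZ : ∀ i, pdf.IsUniform (Z i) (T i) P := hZlaw
  calc ∫ ω, |(∫ x in D, v x) - ∑ i, (volume (T i)).toReal * v (Z i ω)| ^ 2 ∂P
      = ∑ i, variance (fun ω => volume.real (T i) * v (Z i ω)) P :=
        integral_sq_sub_sum_eq_sum_variance_of_isUniform hTmeas hTsub hTdisj
          (fun i => (hTpos i).ne') (fun i => (hTfin i).ne) hcover hZ hZindep hv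
    _ ≤ ∑ i, h ^ (2 + 2 * s) * ∫ p in T i ×ˢ T i, R p ∂volume.prod volume := by
        gcongr with i
        rw [← Measure.prod_restrict]
        refine (hZ i).variance_measureReal_mul_comp_le (hTpos i).ne' (hTfin i).ne (hTmeas i)
          (hTdiam i) (by linarith) (hv.mono_measure (Measure.restrict_mono (hTsub i) le_rfl)) ?_
        rw [Measure.prod_restrict]
        exact hRD.mono_set (Set.prod_mono (hTsub i) (hTsub i))
    _ ≤ h ^ (2 + 2 * s) * ∫ p in D ×ˢ D, R p ∂volume.prod volume := by
        rw [← Finset.mul_sum]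
        gcongr
        exact sum_setIntegral_le_setIntegral (fun i => (hTmeas i).prod (hTmeas i))
          (fun i j hij => Set.disjoint_prod.2 (.inl (hTdisj hij)))
          (fun i => Set.prod_mono (hTsub i) (hTsub i)) hRD (.of_forall fun p => by positivity)
    _ = _ := by rw [← Measure.prod_restrict, integral_integral hsem]

/-- Mean-square error bound for the stratified Monte Carlo quadrature rule for
integrands of fractional Sobolev regularity `W^{s,2}(D)`, `s ∈ (0,1)`:
`E[|∫_D v − ∑ i |T i| v (Z i)|²] ≤ h^{2+2s} |v|²_{W^{s,2}(D)}`. -/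
theorem stmt_5
    {Ω : Type*} [MeasurableSpace Ω] (P : Measure Ω) [IsProbabilityMeasure P]
    (D : Set (EuclideanSpace ℝ (Fin 2))) (hDmeas : MeasurableSet D)
    (hDbdd : Bornology.IsBounded D)
    (h : ℝ) (hh0 : 0 < h) (hh1 : h ≤ 1)
    (N : ℕ) (T : Fin N → Set (EuclideanSpace ℝ (Fin 2)))
    (hTmeas : ∀ i, MeasurableSet (T i))
    (hTsub : ∀ i, T i ⊆ D)
    (hTdisj : Pairwise (Function.onFun Disjoint T))
    (hTpos : ∀ i, 0 < volume (T i))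
    (hTfin : ∀ i, volume (T i) < ⊤)
    (hTdiam : ∀ i, ∀ x ∈ T i, ∀ z ∈ T i, dist x z ≤ h)
    (hcover : volume (D \ ⋃ i, T i) = 0)
    (Z : Fin N → Ω → EuclideanSpace ℝ (Fin 2))
    (hZmeas : ∀ i, Measurable (Z i))
    (hZlaw : ∀ i, Measure.map (Z i) P = (volume (T i))⁻¹ • volume.restrict (T i))
    (hZindep : iIndepFun Z P)
    (s : ℝ) (hs0 : 0 < s) (hs1 : s < 1)
    (v : EuclideanSpace ℝ (Fin 2) → ℝ)
    (hv : MemLp v 2 (volume.restrict D))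
    (hsem : Integrable
      (fun p : EuclideanSpace ℝ (Fin 2) × EuclideanSpace ℝ (Fin 2) =>
        |v p.1 - v p.2| ^ 2 / dist p.1 p.2 ^ (2 + 2 * s))
      ((volume.restrict D).prod (volume.restrict D))) :
    ∫ ω, |(∫ x in D, v x) - ∑ i, (volume (T i)).toReal * v (Z i ω)| ^ 2 ∂P
      ≤ h ^ (2 + 2 * s)
          * ∫ x in D, ∫ z in D, |v x - v z| ^ 2 / dist x z ^ (2 + 2 * s) :=
  stmt_5_general P D h hh0 N T hTmeas hTsub hTdisj hTpos hTfin hTdiam hcover Z hZlaw hZindep s hs0 v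
    hv hsem
end

section
/- Let (x₁,y₁), (x₂,y₂), (x₃,y₃) ∈ ℝ² be affinely independent, let T be the convex hull of these three points, and let Γ : ℝ² → ℝ² be the affine bijection Γ(x,y) = M^{-1}·((x,y) − (x₁,y₁)), where M is the 2×2 matrix with columns (x₂−x₁, y₂−y₁) and (x₃−x₁, y₃−y₁); thus Γ maps (x₁,y₁) to (0,0), (x₂,y₂) to (1,0), and (x₃,y₃) to (0,1), and maps T onto the standard 2-simplex S₂. Let Ŷ be a random variable whose law has density p̂(α,β) = 6(1 − α − β) 𝟙_{S₂}(α,β) with respect to Lebesgue measure. Then the random variable Γ^{-1}(Ŷ) has law with density p(x,y) = 3|T|^{-1} φ(x,y) 𝟙_T(x,y) with respect to Lebesgue measure, where φ : ℝ² → ℝ is the affine function with φ(x₁,y₁) = 1 and φ(x₂,y₂) = φ(x₃,y₃) = 0. -/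
/-!
`Γ` is affine, so it pushes Lebesgue measure forward to `|det Γ|⁻¹` times Lebesgue measure;
hence `Γ⁻¹(Ŷ)` has density `6 |det Γ| (1 - α - β) ∘ Γ` on `Γ⁻¹(S₂) = T`, and
`|T| = |S₂| / |det Γ| = 1 / (2 |det Γ|)`. Finally `φ = (1 - α - β) ∘ Γ`: both sides are affine
and agree at the vertices, whose images under `Γ` span the plane.
-/

open MeasureTheory Set ENNReal

theorem MeasurableEquiv.map_withDensity {α β : Type*} [MeasurableSpace α] [MeasurableSpace β]
    (e : α ≃ᵐ β) (μ : Measure α) (f : α → ℝ≥0∞) :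
    (μ.withDensity f).map e = (μ.map e).withDensity (f ∘ e.symm) := by
  ext s hs
  rw [e.map_apply, withDensity_apply _ (e.measurable hs), withDensity_apply _ hs,
    e.restrict_map, lintegral_map_equiv]
  simp

theorem AffineEquiv.map_addHaar {E : Type*} [NormedAddCommGroup E] [NormedSpace ℝ E]
    [MeasurableSpace E] [BorelSpace E] [FiniteDimensional ℝ E] (μ : Measure E)
    [μ.IsAddHaarMeasure] (A : E ≃ᵃ[ℝ] E) :
    μ.map A = ENNReal.ofReal |LinearMap.det (A.linear : E →ₗ[ℝ] E)|⁻¹ • μ := by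
  have hdet : LinearMap.det (A.linear : E →ₗ[ℝ] E) ≠ 0 :=
    (LinearEquiv.isUnit_det' A.linear).ne_zero
  have hA : ⇑A = (· + A 0) ∘ (A.linear : E →ₗ[ℝ] E) := A.toAffineMap.decomp
  rw [hA, ← Measure.map_map (measurable_add_const _)
    (A.linear : E →ₗ[ℝ] E).continuous_of_finiteDimensional.measurable,
    Measure.map_linearMap_addHaar_eq_smul_addHaar μ hdet, Measure.map_smul,
    map_add_right_eq_self, abs_inv]

theorem AffineEquiv.map_symm_withDensity_addHaar {E : Type*} [NormedAddCommGroup E]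
    [NormedSpace ℝ E] [MeasurableSpace E] [BorelSpace E] [FiniteDimensional ℝ E] (μ : Measure E)
    [μ.IsAddHaarMeasure] (A : E ≃ᵃ[ℝ] E) (f : E → ℝ≥0∞) :
    (μ.withDensity f).map A.symm = μ.withDensity
      fun x => ENNReal.ofReal |LinearMap.det (A.linear : E →ₗ[ℝ] E)| * f (A x) := by
  let e := A.symm.toContinuousAffineEquiv.toHomeomorph.toMeasurableEquiv
  rw [show ⇑A.symm = e from rfl, e.map_withDensity, show μ.map e = μ.map A.symm from rfl,
    A.symm.map_addHaar μ, AffineEquiv.linear_symm, LinearEquiv.det_coe_symm, abs_inv, inv_inv,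
    withDensity_smul_measure, ← withDensity_smul' _ _ ofReal_ne_top]
  rfl

def stdTriangle : Set (ℝ × ℝ) := {q | 0 ≤ q.1 ∧ 0 ≤ q.2 ∧ q.1 + q.2 ≤ 1}

theorem measurableSet_stdTriangle : MeasurableSet stdTriangle := by
  unfold stdTriangle; measurability

theorem convexHull_stdTriangle_vertices :
    convexHull ℝ {(0, 0), (1, 0), (0, 1)} = stdTriangle := by
  refine Subset.antisymm (convexHull_min ?_ ?_) fun q ⟨h₁, h₂, h₁₂⟩ => ?_
  · rintro q (rfl | rfl | rfl) <;> norm_num [stdTriangle]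
  · rintro x ⟨hx₁, hx₂, hx₁₂⟩ y ⟨hy₁, hy₂, hy₁₂⟩ a b ha hb hab
    refine ⟨?_, ?_, ?_⟩ <;> dsimp <;> nlinarith
  · have hconv := convex_convexHull ℝ ({(0, 0), (1, 0), (0, 1)} : Set (ℝ × ℝ))
    have hzero : (0 : ℝ × ℝ) ∈ convexHull ℝ {(0, 0), (1, 0), (0, 1)} :=
      subset_convexHull ℝ _ (Or.inl rfl)
    have hseg : segment ℝ ((1 : ℝ), (0 : ℝ)) (0, 1) ⊆ convexHull ℝ {(0, 0), (1, 0), (0, 1)} :=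
      hconv.segment_subset (subset_convexHull ℝ _ (by simp)) (subset_convexHull ℝ _ (by simp))
    rcases (add_nonneg h₁ h₂).eq_or_lt with ht | ht
    · rwa [show q = 0 from Prod.ext (by simp; linarith) (by simp; linarith)]
    · have hmem : (q.1 + q.2)⁻¹ • q ∈ segment ℝ ((1 : ℝ), (0 : ℝ)) (0, 1) :=
        ⟨(q.1 + q.2)⁻¹ * q.1, (q.1 + q.2)⁻¹ * q.2, by positivity, by positivity,
          by rw [← mul_add, inv_mul_cancel₀ ht.ne'], by ext <;> simp⟩
      have := hconv.smul_mem_of_zero_mem hzero (hseg hmem) ⟨ht.le, h₁₂⟩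
      rwa [smul_smul, mul_inv_cancel₀ ht.ne', one_smul] at this

theorem affineSpan_stdTriangle_vertices :
    affineSpan ℝ ({(0, 0), (1, 0), (0, 1)} : Set (ℝ × ℝ)) = ⊤ := by
  refine eq_top_iff.2 fun q _ => ?_
  rw [← SetLike.mem_coe, Prod.mk_zero_zero, affineSpan_insert_zero]
  have hq : q = q.1 • ((1 : ℝ), (0 : ℝ)) + q.2 • ((0 : ℝ), (1 : ℝ)) := by ext <;> simp
  rw [hq]
  exact Submodule.add_mem _ (Submodule.smul_mem _ _ (Submodule.subset_span (by simp)))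
    (Submodule.smul_mem _ _ (Submodule.subset_span (by simp)))

theorem volume_prodMk_preimage_stdTriangle (x : ℝ) :
    volume (Prod.mk x ⁻¹' stdTriangle)
      = (Icc 0 1).indicator (fun x => ENNReal.ofReal (1 - x)) x := by
  by_cases hx : 0 ≤ x
  · have hfib : Prod.mk x ⁻¹' stdTriangle = Icc 0 (1 - x) := by
      ext y; simp only [stdTriangle, mem_preimage, mem_ofPred_eq, mem_Icc]
      constructor
      · rintro ⟨-, hy, hxy⟩; exact ⟨hy, by linarith⟩
      · rintro ⟨hy, hxy⟩; exact ⟨hx, hy, by linarith⟩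
    rw [hfib, Real.volume_Icc, sub_zero]
    by_cases hx1 : x ≤ 1
    · rw [indicator_of_mem (show x ∈ Icc 0 1 from ⟨hx, hx1⟩)]
    · rw [indicator_of_notMem (fun h => hx1 h.2), ENNReal.ofReal_eq_zero]; linarith
  · have hfib : Prod.mk x ⁻¹' stdTriangle = ∅ := by
      ext y; simp only [stdTriangle, mem_preimage, mem_ofPred_eq, mem_empty_iff_false, iff_false]
      exact fun h => hx h.1
    rw [hfib, measure_empty, indicator_of_notMem (fun h => hx h.1)]

theorem volume_stdTriangle : volume stdTriangle = ENNReal.ofReal 2⁻¹ := by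
  rw [Measure.volume_eq_prod, Measure.prod_apply measurableSet_stdTriangle]
  simp_rw [volume_prodMk_preimage_stdTriangle]
  rw [lintegral_indicator measurableSet_Icc, ← ofReal_integral_eq_lintegral_ofReal,
    integral_Icc_eq_integral_Ioc, ← intervalIntegral.integral_of_le zero_le_one]
  · rw [intervalIntegral.integral_sub intervalIntegrable_const
      intervalIntegral.intervalIntegrable_id, integral_id]
    norm_num
  · exact (continuous_const.sub continuous_id).integrableOn_Icc
  · filter_upwards [ae_restrict_mem measurableSet_Icc] with x hx
    simpa using hx.2

theorem AffineEquiv.volume_preimage_stdTriangle (A : (ℝ × ℝ) ≃ᵃ[ℝ] (ℝ × ℝ)) :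
    volume (A ⁻¹' stdTriangle)
      = ENNReal.ofReal (|LinearMap.det (A.linear : (ℝ × ℝ) →ₗ[ℝ] (ℝ × ℝ))|⁻¹ * 2⁻¹) := by
  rw [← Measure.map_apply (f := A) A.toAffineMap.continuous_of_finiteDimensional.measurable
    measurableSet_stdTriangle, A.map_addHaar volume, Measure.smul_apply, volume_stdTriangle,
    smul_eq_mul, ← ofReal_mul (by positivity)]

theorem preimage_stdTriangle_eq_convexHull {p₁ p₂ p₃ : ℝ × ℝ} {Γ : (ℝ × ℝ) ≃ᵃ[ℝ] (ℝ × ℝ)}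
    (hΓ₁ : Γ p₁ = (0, 0)) (hΓ₂ : Γ p₂ = (1, 0)) (hΓ₃ : Γ p₃ = (0, 1)) :
    Γ ⁻¹' stdTriangle = convexHull ℝ {p₁, p₂, p₃} := by
  rw [← Γ.image_symm, ← convexHull_stdTriangle_vertices, ← AffineEquiv.coe_toAffineMap,
    AffineMap.image_convexHull, ← hΓ₁, ← hΓ₂, ← hΓ₃]
  simp [image_insert_eq]

theorem AffineMap.apply_eq_one_sub_fst_sub_snd {p₁ p₂ p₃ : ℝ × ℝ} {Γ : (ℝ × ℝ) ≃ᵃ[ℝ] (ℝ × ℝ)}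
    (hΓ₁ : Γ p₁ = (0, 0)) (hΓ₂ : Γ p₂ = (1, 0)) (hΓ₃ : Γ p₃ = (0, 1))
    {φ : (ℝ × ℝ) →ᵃ[ℝ] ℝ} (hφ₁ : φ p₁ = 1) (hφ₂ : φ p₂ = 0) (hφ₃ : φ p₃ = 0) (x : ℝ × ℝ) :
    φ x = 1 - (Γ x).1 - (Γ x).2 := by
  have h : φ.comp Γ.symm.toAffineMap =
      AffineMap.const ℝ _ 1 - (LinearMap.fst ℝ ℝ ℝ + LinearMap.snd ℝ ℝ ℝ).toAffineMap := by
    refine AffineMap.ext_on affineSpan_stdTriangle_vertices ?_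
    rintro q (rfl | rfl | rfl)
    · simp [Γ.symm_apply_eq.2 hΓ₁.symm, hφ₁]
    · simp [Γ.symm_apply_eq.2 hΓ₂.symm, hφ₂]
    · simp [Γ.symm_apply_eq.2 hΓ₃.symm, hφ₃]
  simpa [sub_sub] using congr($h (Γ x))

theorem stmt_12_general
    {Ω : Type*} [MeasurableSpace Ω] (P : Measure Ω)
    (p₁ p₂ p₃ : ℝ × ℝ)
    (T : Set (ℝ × ℝ)) (hT : T = convexHull ℝ {p₁, p₂, p₃})
    (Γ : (ℝ × ℝ) ≃ᵃ[ℝ] (ℝ × ℝ))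
    (hΓ₁ : Γ p₁ = (0, 0)) (hΓ₂ : Γ p₂ = (1, 0)) (hΓ₃ : Γ p₃ = (0, 1))
    (φ : (ℝ × ℝ) →ᵃ[ℝ] ℝ)
    (hφ₁ : φ p₁ = 1) (hφ₂ : φ p₂ = 0) (hφ₃ : φ p₃ = 0)
    (S₂ : Set (ℝ × ℝ)) (hS₂ : S₂ = {q : ℝ × ℝ | 0 ≤ q.1 ∧ 0 ≤ q.2 ∧ q.1 + q.2 ≤ 1})
    (Yhat : Ω → ℝ × ℝ) (hYmeas : Measurable Yhat)
    (hYlaw : Measure.map Yhat P = volume.withDensity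
      (fun q => ENNReal.ofReal (S₂.indicator (fun q => 6 * (1 - q.1 - q.2)) q))) :
    Measure.map (fun ω => Γ.symm (Yhat ω)) P
      = volume.withDensity
          (fun x => ENNReal.ofReal
            (T.indicator (fun x => 3 * (volume T).toReal⁻¹ * φ x) x)) := by
  obtain rfl : S₂ = stdTriangle := hS₂
  obtain rfl : T = Γ ⁻¹' stdTriangle :=
    hT.trans (preimage_stdTriangle_eq_convexHull hΓ₁ hΓ₂ hΓ₃).symm
  rw [show (fun ω => Γ.symm (Yhat ω)) = Γ.symm ∘ Yhat from rfl,
    ← Measure.map_map (g := Γ.symm) Γ.symm.toAffineMap.continuous_of_finiteDimensional.measurable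
      hYmeas, hYlaw, Γ.map_symm_withDensity_addHaar volume, Γ.volume_preimage_stdTriangle,
    toReal_ofReal (by positivity)]
  congr 1
  funext x
  rw [← ofReal_mul (abs_nonneg _)]
  by_cases hx : Γ x ∈ stdTriangle
  · rw [indicator_of_mem hx, indicator_of_mem (show x ∈ Γ ⁻¹' stdTriangle from hx),
      AffineMap.apply_eq_one_sub_fst_sub_snd hΓ₁ hΓ₂ hΓ₃ hφ₁ hφ₂ hφ₃ x]
    congr 1
    field_simp
    ring
  · rw [indicator_of_notMem hx, indicator_of_notMem (show x ∉ Γ ⁻¹' stdTriangle from hx),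
      mul_zero]

/-- Transformation of the reference density on the standard 2-simplex to an
arbitrary nondegenerate triangle: if `Γ` is the affine bijection sending the
vertices `p₁, p₂, p₃` of `T` to `(0,0), (1,0), (0,1)` and `Yhat` has density
`6 (1 − α − β) 𝟙_{S₂}(α,β)`, then `Γ⁻¹(Yhat)` has density
`3 |T|⁻¹ φ(x) 𝟙_T(x)`, where `φ` is affine with `φ p₁ = 1`, `φ p₂ = φ p₃ = 0`. -/
theorem stmt_12
    {Ω : Type*} [MeasurableSpace Ω] (P : Measure Ω) [IsProbabilityMeasure P]
    (p₁ p₂ p₃ : ℝ × ℝ) (hind : AffineIndependent ℝ ![p₁, p₂, p₃])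
    (T : Set (ℝ × ℝ)) (hT : T = convexHull ℝ {p₁, p₂, p₃})
    (Γ : (ℝ × ℝ) ≃ᵃ[ℝ] (ℝ × ℝ))
    (hΓ₁ : Γ p₁ = (0, 0)) (hΓ₂ : Γ p₂ = (1, 0)) (hΓ₃ : Γ p₃ = (0, 1))
    (φ : (ℝ × ℝ) →ᵃ[ℝ] ℝ)
    (hφ₁ : φ p₁ = 1) (hφ₂ : φ p₂ = 0) (hφ₃ : φ p₃ = 0)
    (S₂ : Set (ℝ × ℝ)) (hS₂ : S₂ = {q : ℝ × ℝ | 0 ≤ q.1 ∧ 0 ≤ q.2 ∧ q.1 + q.2 ≤ 1})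
    (Yhat : Ω → ℝ × ℝ) (hYmeas : Measurable Yhat)
    (hYlaw : Measure.map Yhat P = volume.withDensity
      (fun q => ENNReal.ofReal (S₂.indicator (fun q => 6 * (1 - q.1 - q.2)) q))) :
    Measure.map (fun ω => Γ.symm (Yhat ω)) P
      = volume.withDensity
          (fun x => ENNReal.ofReal
            (T.indicator (fun x => 3 * (volume T).toReal⁻¹ * φ x) x)) :=
  stmt_12_general P p₁ p₂ p₃ T hT Γ hΓ₁ hΓ₂ hΓ₃ φ hφ₁ hφ₂ hφ₃ S₂ hS₂ Yhat hYmeas hYlaw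
end
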